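/- If u and v are orthonormal octonions, then the map x ↦ (x·ū)·v is an orthogonal complex structure on O: it squares to -Id and preserves the Euclidean norm on O ≅ ℝ⁸. -/

import Mathlib

open Quaternion

noncomputable section

/-- The octonions, via the Cayley–Dickson construction on the quaternions. -/
def O : Type := ℍ[ℝ] × ℍ[ℝ]

namespace O

instance : AddCommGroup O := inferInstanceAs (AddCommGroup (ℍ[ℝ] × ℍ[ℝ]))
instance : Module ℝ O := inferInstanceAs (Module ℝ (ℍ[ℝ] × ℍ[ℝ]))

def mk (a b : ℍ[ℝ]) : O := (a, b)
def fst (x : O) : ℍ[ℝ] := Prod.fst x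
def snd (x : O) : ℍ[ℝ] := Prod.snd x

instance : One O := ⟨mk 1 0⟩
/-- Cayley–Dickson multiplication. -/
instance : Mul O := ⟨fun x y =>
  mk (fst x * fst y - star (snd y) * snd x) (snd y * fst x + snd x * star (fst y))⟩

/-- Octonion conjugation. -/
def conj (x : O) : O := mk (star (fst x)) (-(snd x))

/-- The standard inner product on `O ≅ ℝ⁸`. -/
def inner (x y : O) : ℝ := (Inner.inner ℝ (fst x) (fst y) : ℝ) + (Inner.inner ℝ (snd x) (snd y) : ℝ)

def normSq (x : O) : ℝ := inner x x
def norm (x : O) : ℝ := Real.sqrt (normSq x)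

/-- The map `m_u` on `O ⊕ O`, given by `m_u (x, x') = (x'·u, -x·ū)`. -/
def m (u : O) : O × O → O × O := fun p => (p.2 * u, -(p.1 * conj u))

/-- The standard inner product on `O ⊕ O`. -/
def innerPair (p q : O × O) : ℝ := inner p.1 q.1 + inner p.2 q.2

end O

/-!
The map `J x = (x ū) v` is the composite of two right multiplications. By the polarized
composition law `⟨x a, y b⟩ + ⟨x b, y a⟩ = 2 ⟨x, y⟩ ⟨a, b⟩` of the octonions, right
multiplication by a unit is an isometry, so `J` is one; and since the adjoint of right
multiplication by `a` is right multiplication by `ā`, the same law with `a = ū`, `b = v̄`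
shows that `J` is skew-adjoint exactly when `⟨u, v⟩ = 0`. An isometry `J` with `J* = -J`
satisfies `J² = -J* J = -1`.
-/

namespace O

theorem fst_mul (x y : O) : fst (x * y) = fst x * fst y - star (snd y) * snd x := rfl
theorem snd_mul (x y : O) : snd (x * y) = snd y * fst x + snd x * star (fst y) := rfl
theorem fst_conj (x : O) : fst (conj x) = star (fst x) := rfl
theorem snd_conj (x : O) : snd (conj x) = -snd x := rfl

theorem inner_eq_re (x y : O) :
    inner x y = (fst x * star (fst y)).re + (snd x * star (snd y)).re := by
  simp only [inner, Quaternion.inner_def]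

theorem inner_comm (x y : O) : inner x y = inner y x := by
  simp only [inner, real_inner_comm]

theorem inner_add_left (x y z : O) : inner (x + y) z = inner x z + inner y z := by
  simp only [inner, add_add_add_comm]
  exact congrArg₂ (· + ·) (_root_.inner_add_left _ _ _) (_root_.inner_add_left _ _ _)

theorem eq_zero_of_inner_self_eq_zero {x : O} (h : inner x x = 0) : x = 0 := by
  obtain ⟨hfst, hsnd⟩ :=
    (add_eq_zero_iff_of_nonneg real_inner_self_nonneg real_inner_self_nonneg).1 h
  exact Prod.ext (inner_self_eq_zero.1 hfst) (inner_self_eq_zero.1 hsnd)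

theorem inner_self_eq_one_of_norm_eq_one {x : O} (h : norm x = 1) : inner x x = 1 := by
  rwa [norm, normSq, Real.sqrt_eq_one] at h

theorem inner_conj_conj (x y : O) : inner (conj x) (conj y) = inner x y := by
  simp only [inner_eq_re, fst_conj, snd_conj]
  simp [Quaternion.re_mul]

theorem inner_mul_add_inner_mul (x y a b : O) :
    inner (x * a) (y * b) + inner (x * b) (y * a) = 2 * inner x y * inner a b := by
  simp only [inner_eq_re, fst_mul, snd_mul]
  simp [Quaternion.re_mul]
  ring

theorem inner_mul_mul_right (x y a : O) : inner (x * a) (y * a) = inner x y * inner a a := by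
  linarith [inner_mul_add_inner_mul x y a a]

theorem inner_mul_right_left (x a y : O) : inner (x * a) y = inner x (y * conj a) := by
  simp only [inner_eq_re, fst_mul, snd_mul, fst_conj, snd_conj]
  simp [Quaternion.re_mul]
  ring

theorem comp_self_eq_neg_of_isometry_of_skew (J : O → O)
    (hiso : ∀ x y, inner (J x) (J y) = inner x y)
    (hskew : ∀ x y, inner (J x) y = -inner x (J y)) (x : O) : J (J x) = -x := by
  set z := J (J x) + x
  have hzz : inner z z = 0 := by
    rw [inner_add_left, hskew, hiso, inner_comm x z]
    ring
  exact eq_neg_of_add_eq_zero_left (eq_zero_of_inner_self_eq_zero hzz)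

section
variable {u v : O}

theorem inner_mul_conj_mul_mul_conj_mul (hu : inner u u = 1) (hv : inner v v = 1) (x y : O) :
    inner (x * conj u * v) (y * conj u * v) = inner x y := by
  rw [inner_mul_mul_right, inner_mul_mul_right, inner_conj_conj, hu, hv, mul_one, mul_one]

theorem inner_mul_conj_mul_left (huv : inner u v = 0) (x y : O) :
    inner (x * conj u * v) y = -inner x (y * conj u * v) := by
  have hsum := inner_mul_add_inner_mul x y (conj u) (conj v)
  rw [inner_conj_conj, huv, mul_zero] at hsum
  rw [inner_mul_right_left (x * conj u), inner_comm x, inner_mul_right_left (y * conj u),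
    inner_comm (y * conj u)]
  linarith

end

end O

/-- For orthonormal octonions `u, v`, the map `x ↦ (x ū) v` is an orthogonal complex
structure on `O`. -/
theorem octonion_orthogonal_complex_structure (u v : O)
    (hu : O.norm u = 1) (hv : O.norm v = 1) (huv : O.inner u v = 0) :
    (∀ x : O, ((((x * O.conj u) * v) * O.conj u) * v) = -x) ∧
    (∀ x : O, O.norm ((x * O.conj u) * v) = O.norm x) := by
  have hiso := O.inner_mul_conj_mul_mul_conj_mul
    (O.inner_self_eq_one_of_norm_eq_one hu) (O.inner_self_eq_one_of_norm_eq_one hv)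
  refine ⟨O.comp_self_eq_neg_of_isometry_of_skew (fun x => x * O.conj u * v) hiso
    (O.inner_mul_conj_mul_left huv), fun x => ?_⟩
  rw [O.norm, O.normSq, hiso, ← O.normSq, ← O.norm]
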